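/- (At most two heads per tail-antenna pair) For Q ⊆ 𝔽²_s a set of binary s-pider queries, and for each pair a₁, a₂ of elements of Chase(T_Q, green full s-pider), there are at most two elements a such that H(a, a₁, a₂) holds, and the (at most two) s-piders with such heads a are all of the same color. -/
import Mathlib


/-!  A general framework for relational structures, conjunctive queries,
tuple generating dependencies (TGDs), and the chase, following
Gogacz–Marcinkowski, "The Hunt for a Red Spider: Conjunctive Query
Determinacy Is Undecidable". -/

namespace CQD

/-- A relational structure over relation symbols `R` and domain `D`:
a set of atoms, each a relation symbol together with its tuple of arguments. -/
abbrev Struc (R D : Type*) := Set (R × List D)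

/-- Map a structure along a function on domain elements. -/
def smap {R D E : Type*} (h : D → E) (S : Struc R D) : Struc R E :=
  (fun a => (a.1, a.2.map h)) '' S

/-- Terms over constants `K`: variables (natural numbers) or constants. -/
abbrev Term (K : Type*) := ℕ ⊕ K

/-- A conjunction of atoms over variables and constants from `K`. -/
abbrev Conj (R K : Type*) := Struc R (Term K)

/-- `h` is a homomorphism from the conjunction `Φ` into the structure `S`,
where the constants are interpreted by `ι`. -/
def IsHom {R K D : Type*} (Φ : Conj R K) (S : Struc R D) (ι : K → D) (h : ℕ → D) : Prop :=
  ∀ a ∈ Φ, (a.1, a.2.map (Sum.elim h ι)) ∈ S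

/-- A tuple-generating dependency `∀ x̄ ȳ (body(x̄,ȳ) → ∃ z̄ head(z̄,ȳ))`;
`frontier` is the set of universally quantified variables `ȳ` shared by body and head. -/
structure TGD (R K : Type*) where
  body : Conj R K
  head : Conj R K
  frontier : Set ℕ

/-- `Φ` holds in `S` at the tuple `b` (given on the frontier variables `fr`). -/
def holdsAt {R K D : Type*} (Φ : Conj R K) (fr : Set ℕ) (S : Struc R D) (ι : K → D)
    (b : ℕ → D) : Prop :=
  ∃ h : ℕ → D, IsHom Φ S ι h ∧ ∀ y ∈ fr, h y = b y

/-- A structure satisfies a TGD in the usual first-order sense. -/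
def TGD.sat {R K D : Type*} (T : TGD R K) (S : Struc R D) (ι : K → D) : Prop :=
  ∀ b, holdsAt T.body T.frontier S ι b → holdsAt T.head T.frontier S ι b

/-- The `ToDo` set: pairs `⟨b̄, T⟩` whose body is satisfied at `b̄` but which still
lack a witness for the head. -/
def ToDo {R K D : Type*} (𝒯 : Set (TGD R K)) (S : Struc R D) (ι : K → D) :
    Set ((ℕ → D) × TGD R K) :=
  {p | p.2 ∈ 𝒯 ∧ holdsAt p.2.body p.2.frontier S ι p.1 ∧
       ¬ holdsAt p.2.head p.2.frontier S ι p.1}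

/-- The active domain of a structure. -/
def adom {R D : Type*} (S : Struc R D) : Set D := {d | ∃ a ∈ S, d ∈ a.2}

/-- `S'` is the result of one application `T(S, b̄)` of the TGD `T` to `S` at tuple `b̄`:
a fresh copy of the head is added, its frontier variables identified with `b̄`. -/
def IsStep {R K D : Type*} (T : TGD R K) (S : Struc R D) (ι : K → D) (b : ℕ → D)
    (S' : Struc R D) : Prop :=
  ∃ g : ℕ → D,
    (∀ y ∈ T.frontier, g y = b y) ∧
    (∀ x ∉ T.frontier, g x ∉ adom S ∧ g x ∉ Set.range ι) ∧
    Set.InjOn g {x | x ∉ T.frontier} ∧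
    S' = S ∪ smap (Sum.elim g ι) T.head

/-- Union of the stages strictly below `i`. -/
def partUnion {X : Type*} (seq : Ordinal.{0} → Set X) (i : Ordinal.{0}) : Set X :=
  ⋃ j ∈ Set.Iio i, seq j

/-- A fair chase sequence for the set `𝒯` of TGDs starting from `D0`. -/
structure ChaseSeq {R K D : Type*} (𝒯 : Set (TGD R K)) (D0 : Struc R D) (ι : K → D) where
  len : Ordinal.{0}
  pos : 0 < len
  seq : Ordinal.{0} → Struc R D
  init : seq 0 = D0
  step : ∀ i, 0 < i → i < len →
    ∃ p ∈ ToDo 𝒯 (partUnion seq i) ι, IsStep p.2 (partUnion seq i) ι p.1 (seq i)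
  fair : ∀ i < len, ∀ p ∈ ToDo 𝒯 (partUnion seq i) ι,
    ∃ k, i < k ∧ k ≤ len ∧ p ∉ ToDo 𝒯 (partUnion seq k) ι

/-- The result of a chase sequence: the union of all its stages. -/
def ChaseSeq.result {R K D : Type*} {𝒯 : Set (TGD R K)} {D0 : Struc R D} {ι : K → D}
    (C : ChaseSeq 𝒯 D0 ι) : Struc R D := partUnion C.seq C.len

/-- `S` is (the result of) a chase of `𝒯` over `D0`. -/
def IsChase {R K D : Type*} (𝒯 : Set (TGD R K)) (D0 : Struc R D) (ι : K → D)
    (S : Struc R D) : Prop :=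
  ∃ C : ChaseSeq 𝒯 D0 ι, C.result = S

/-- A conjunctive query: a conjunction of atoms with designated free variables. -/
structure CQ (R K : Type*) where
  body : Conj R K
  free : Set ℕ

/-- Colored (green/red) relation symbols: `true` = green, `false` = red. -/
abbrev CRel (R : Type*) := R × Bool

/-- Paint all atoms of a conjunction with the color `c`. -/
def paint {R K : Type*} (c : Bool) (Φ : Conj R K) : Conj (CRel R) K :=
  (fun a => ((a.1, c), a.2)) '' Φ

/-- The view `Q(S)` defined by a query with body `Φ` and free variables `fr`
over the structure `S`: the set of satisfying assignments of the free variables. -/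
def eval {R K D : Type*} (Φ : Conj R K) (fr : Set ℕ) (S : Struc R D) (ι : K → D) :
    Set (ℕ → D) :=
  {b | holdsAt Φ fr S ι b}

/-- The green-red TGD generated by `Q`, from color `c` to the opposite color
(`tgdGR true Q` is `Q^{G→R}`, `tgdGR false Q` is `Q^{R→G}`). -/
def tgdGR {R K : Type*} (c : Bool) (Q : CQ R K) : TGD (CRel R) K :=
  ⟨paint c Q.body, paint (!c) Q.body, Q.free⟩

/-- The set `𝒯_𝒬` of green-red TGDs generated by a set of conjunctive queries. -/
def TQ {R K : Type*} (𝒬 : Set (CQ R K)) : Set (TGD (CRel R) K) :=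
  {T | ∃ Q ∈ 𝒬, ∃ c : Bool, T = tgdGR c Q}

end CQD

/-! The s-pider signature, ideal s-piders, s-pider queries and the s-pider chase. -/

namespace Spider

open CQD

/-- Relation symbols of the s-pider signature: a ternary `H`, thighs `T_i, T^i`
and calves `C_i, C^i` (all binary). -/
inductive SpRel (s : ℕ) : Type
  | H : SpRel s
  | Tlo : Fin s → SpRel s
  | Tup : Fin s → SpRel s
  | Clo : Fin s → SpRel s
  | Cup : Fin s → SpRel s

/-- Constants `c_i` (left) and `c^i` (right). -/
abbrev SpK (s : ℕ) := Fin s ⊕ Fin s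

abbrev SpTerm (s : ℕ) := CQD.Term (SpK s)

/-- The head variable `z`. -/
def vz (s : ℕ) : SpTerm s := Sum.inl 0
/-- The tail variable `z₁`. -/
def vtail (s : ℕ) : SpTerm s := Sum.inl 1
/-- The antenna variable `z₂`. -/
def vant (s : ℕ) : SpTerm s := Sum.inl 2
/-- The lower knee variable `x_i`. -/
def vx (s : ℕ) (i : Fin s) : SpTerm s := Sum.inl (2 * (i : ℕ) + 3)
/-- The upper knee variable `y_i`. -/
def vy (s : ℕ) (i : Fin s) : SpTerm s := Sum.inl (2 * (i : ℕ) + 4)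
/-- The constant `c_i`. -/
def clo (s : ℕ) (i : Fin s) : SpTerm s := Sum.inr (Sum.inl i)
/-- The constant `c^i`. -/
def cup (s : ℕ) (i : Fin s) : SpTerm s := Sum.inr (Sum.inr i)

/-- The conjunction `Φ_s`:
`H(z,z₁,z₂) ∧ ⋀ᵢ T_i(z,x_i) ∧ T^i(z,y_i) ∧ C_i(x_i,c_i) ∧ C^i(y_i,c^i)`. -/
def Phi (s : ℕ) : Conj (SpRel s) (SpK s) :=
  {(SpRel.H, [vz s, vtail s, vant s])} ∪
  ⋃ i : Fin s,
    ({(SpRel.Tlo i, [vz s, vx s i]), (SpRel.Tup i, [vz s, vy s i]),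
      (SpRel.Clo i, [vx s i, clo s i]), (SpRel.Cup i, [vy s i, cup s i])} :
      Set (SpRel s × List (SpTerm s)))

/-- The ideal s-pider of color `c` with (empty-or-singleton) upper lame index `I`
and lower lame index `J`: the `c`-colored `Φ_s` with the calf atoms indexed by `I`
and `J` recolored to the opposite color. -/
def idealSp (s : ℕ) (c : Bool) (I J : Option (Fin s)) :
    Struc (CRel (SpRel s)) (SpTerm s) :=
  {((SpRel.H, c), [vz s, vtail s, vant s])} ∪
  ⋃ i : Fin s,
    ({((SpRel.Tlo i, c), [vz s, vx s i]), ((SpRel.Tup i, c), [vz s, vy s i]),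
      ((SpRel.Clo i, if J = some i then !c else c), [vx s i, clo s i]),
      ((SpRel.Cup i, if I = some i then !c else c), [vy s i, cup s i])} :
      Set (CRel (SpRel s) × List (SpTerm s)))

/-- The s-pider query `f^I_J`: the conjunction `Φ_s` with the calves indexed by
`I` (upper) and `J` (lower) removed; its free variables are the corresponding knees. -/
def spq (s : ℕ) (I J : Option (Fin s)) : CQ (SpRel s) (SpK s) where
  body := Phi s \
    ({a | ∃ i ∈ I, a = (SpRel.Cup i, [vy s i, cup s i])} ∪
     {a | ∃ j ∈ J, a = (SpRel.Clo j, [vx s j, clo s j])})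
  free := {n | (∃ i ∈ I, n = 2 * (i : ℕ) + 4) ∨ (∃ j ∈ J, n = 2 * (j : ℕ) + 3)}

/-- The set `𝔽_s` of s-pider queries (1-lame and 2-lame). -/
def SpiderQs (s : ℕ) : Set (CQ (SpRel s) (SpK s)) :=
  {q | ∃ I J : Option (Fin s), (I.isSome ∨ J.isSome) ∧ q = spq s I J}

/-- The interpretation of the constants in the canonical domain. -/
def spι (s : ℕ) : SpK s → SpTerm s := Sum.inr

/-- `S` is (the result of) a chase of the green-red TGDs generated by `𝒬`,
starting from the ideal green full s-pider. -/
def SpChase (s : ℕ) (𝒬 : Set (CQ (SpRel s) (SpK s)))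
    (S : Struc (CRel (SpRel s)) (SpTerm s)) : Prop :=
  IsChase (TQ 𝒬) (idealSp s true none none) (spι s) S

/-- `x ⊆ y` for empty-or-singleton sets coded as `Option`. -/
def osub {s : ℕ} (x y : Option (Fin s)) : Prop := ∀ i : Fin s, x = some i → y = some i

/-- `y ∖ x` for empty-or-singleton sets coded as `Option` (assuming `x ⊆ y`). -/
def odiff {s : ℕ} (y x : Option (Fin s)) : Option (Fin s) :=
  match x with | none => y | some _ => none

/-- A copy of the canonical structure `T0` occurs inside `S` (an injective
renaming of vertices which fixes the constants). -/
def CopyIn {s : ℕ} {V : Type*} (T0 : Struc (CRel (SpRel s)) (SpTerm s))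
    (ι : SpK s → V) (S : Struc (CRel (SpRel s)) V) : Prop :=
  ∃ m : SpTerm s → V, Set.InjOn m (adom T0) ∧ (∀ k, m (Sum.inr k) = ι k) ∧
    smap m T0 ⊆ S

/-- `𝒮` is an isomorphic copy of the canonical structure `T0`. -/
def IsCopy {s : ℕ} {V : Type*} (T0 : Struc (CRel (SpRel s)) (SpTerm s))
    (ι : SpK s → V) (𝒮 : Struc (CRel (SpRel s)) V) : Prop :=
  ∃ m : SpTerm s → V, Set.InjOn m (adom T0) ∧ (∀ k, m (Sum.inr k) = ι k) ∧
    smap m T0 = 𝒮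

/-- Erase the colors of a colored structure. -/
def dalt {s : ℕ} {V : Type*} (S : Struc (CRel (SpRel s)) V) : Struc (SpRel s) V :=
  (fun a => (a.1.1, a.2)) '' S

/-- `𝒮` is a real s-pider in `S`: a minimal substructure whose daltonisation
satisfies `Φ_s`. -/
def RealSpider {s : ℕ} {V : Type*} (S 𝒮 : Struc (CRel (SpRel s)) V)
    (ι : SpK s → V) : Prop :=
  𝒮 ⊆ S ∧ (∃ h, IsHom (Phi s) (dalt 𝒮) ι h) ∧
    ∀ 𝒮' ⊂ 𝒮, ¬ ∃ h, IsHom (Phi s) (dalt 𝒮') ι h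

/-- Abstract ideal s-piders: a color and the two lame indices.  `𝔸_s`. -/
abbrev ISp (s : ℕ) := Bool × Option (Fin s) × Option (Fin s)

/-- The canonical structure of an abstract ideal s-pider. -/
def idealOf (s : ℕ) (p : ISp s) : Struc (CRel (SpRel s)) (SpTerm s) :=
  idealSp s p.1 p.2.1 p.2.2

/-- The zoo: all ideal s-piders isomorphic to some real s-pider in `S`. -/
def zoo {s : ℕ} (S : Struc (CRel (SpRel s)) (SpTerm s)) : Set (ISp s) :=
  {p | ∃ 𝒮, RealSpider S 𝒮 (spι s) ∧ IsCopy (idealOf s p) (spι s) 𝒮}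

/-- Closure of a set of abstract ideal s-piders under the partial functions
`f^I_J` for `(I,J) ∈ F`. -/
def ClosedUnder {s : ℕ} (F : Set (Option (Fin s) × Option (Fin s)))
    (Z : Set (ISp s)) : Prop :=
  ∀ IJ ∈ F, ∀ p ∈ Z, osub p.2.1 IJ.1 → osub p.2.2 IJ.2 →
    (!p.1, odiff IJ.1 p.2.1, odiff IJ.2 p.2.2) ∈ Z

end Spider

namespace Spider

open CQD

/-- Rename the variables of a conjunction. -/
def tshift {R K : Type*} (ρ : ℕ → ℕ) (Φ : Conj R K) : Conj R K :=
  smap (Sum.map ρ id) Φ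

/-- Offset used to keep the variables of the two components disjoint. -/
def voff (s : ℕ) : ℕ := 2 * s + 5

/-- Renaming for the second component of `f ∧↑ f'`: the antenna `z₂` (variable 2)
is shared, all other variables are shifted. -/
def ρw (s : ℕ) (v : ℕ) : ℕ := if v = 2 then 2 else v + voff s

/-- Renaming for the second component of `f ∨↑ f'`: the tail `z₁` (variable 1)
is shared, all other variables are shifted. -/
def ρv (s : ℕ) (v : ℕ) : ℕ := if v = 1 then 1 else v + voff s

/-- The binary query `f ∧↑ f'`: antennas identified; the two tails are free. -/
def wedgeQ (s : ℕ) (f f' : CQ (SpRel s) (SpK s)) : CQ (SpRel s) (SpK s) where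
  body := f.body ∪ tshift (ρw s) f'.body
  free := (f.free ∪ (ρw s '' f'.free)) ∪ {1, 1 + voff s}

/-- The binary query `f ∨↑ f'`: tails identified; the two antennas are free. -/
def veeQ (s : ℕ) (f f' : CQ (SpRel s) (SpK s)) : CQ (SpRel s) (SpK s) where
  body := f.body ∪ tshift (ρv s) f'.body
  free := (f.free ∪ (ρv s '' f'.free)) ∪ {2, 2 + voff s}

/-- The set `𝔽²_s` of binary s-pider queries. -/
def BinQs (s : ℕ) : Set (CQ (SpRel s) (SpK s)) :=
  {q | ∃ f ∈ SpiderQs s, ∃ f' ∈ SpiderQs s, q = wedgeQ s f f' ∨ q = veeQ s f f'}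

end Spider

namespace Spider
open CQD

lemma mem_partUnion {X : Type*} {seq : Ordinal.{0} → Set X} {i : Ordinal.{0}} {x : X} :
    x ∈ partUnion seq i ↔ ∃ j < i, x ∈ seq j := by
  simp [partUnion]

lemma phi_H {s : ℕ} {l : List (SpTerm s)} (h : (SpRel.H, l) ∈ Phi s) :
    l = [Sum.inl 0, Sum.inl 1, Sum.inl 2] := by
  rcases h with h | h
  · simpa [vz, vtail, vant] using h
  · simp only [Set.mem_iUnion] at h
    rcases h with ⟨i, h⟩
    simp only [Set.mem_insert_iff, Set.mem_singleton_iff, Prod.mk.injEq] at h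
    rcases h with ⟨h, -⟩ | ⟨h, -⟩ | ⟨h, -⟩ | ⟨h, -⟩ <;> exact absurd h (by simp)

lemma spq_H {s : ℕ} {I J : Option (Fin s)} {l : List (SpTerm s)}
    (h : (SpRel.H, l) ∈ (spq s I J).body) :
    l = [Sum.inl 0, Sum.inl 1, Sum.inl 2] := phi_H h.1

lemma spq_free_ge {s : ℕ} {I J : Option (Fin s)} {n : ℕ} (h : n ∈ (spq s I J).free) :
    3 ≤ n := by
  rcases h with ⟨i, -, rfl⟩ | ⟨j, -, rfl⟩ <;> omega

end Spider
namespace Spider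
open CQD

lemma tshift_H {s : ℕ} {ρ : ℕ → ℕ} {B : Conj (SpRel s) (SpK s)} {l : List (SpTerm s)}
    (h : (SpRel.H, l) ∈ tshift ρ B) :
    ∃ l0, (SpRel.H, l0) ∈ B ∧ l = l0.map (Sum.map ρ id) := by
  rcases h with ⟨⟨r, l0⟩, hm, he⟩
  simp only [Prod.mk.injEq] at he
  exact ⟨l0, by rwa [he.1] at hm, he.2.symm⟩

lemma wedge_H {s : ℕ} {f f' : CQ (SpRel s) (SpK s)} (hf : f ∈ SpiderQs s)
    (hf' : f' ∈ SpiderQs s) {l : List (SpTerm s)}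
    (h : (SpRel.H, l) ∈ (wedgeQ s f f').body) :
    l = [Sum.inl 0, Sum.inl 1, Sum.inl 2] ∨
    l = [Sum.inl (voff s), Sum.inl (1 + voff s), Sum.inl 2] := by
  obtain ⟨I, J, -, rfl⟩ := hf
  obtain ⟨I', J', -, rfl⟩ := hf'
  rcases h with h | h
  · exact Or.inl (spq_H h)
  · obtain ⟨l0, hm, rfl⟩ := tshift_H h
    rw [spq_H hm]
    right
    simp [ρw, voff]

lemma vee_H {s : ℕ} {f f' : CQ (SpRel s) (SpK s)} (hf : f ∈ SpiderQs s)
    (hf' : f' ∈ SpiderQs s) {l : List (SpTerm s)}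
    (h : (SpRel.H, l) ∈ (veeQ s f f').body) :
    l = [Sum.inl 0, Sum.inl 1, Sum.inl 2] ∨
    l = [Sum.inl (voff s), Sum.inl 1, Sum.inl (2 + voff s)] := by
  obtain ⟨I, J, -, rfl⟩ := hf
  obtain ⟨I', J', -, rfl⟩ := hf'
  rcases h with h | h
  · exact Or.inl (spq_H h)
  · obtain ⟨l0, hm, rfl⟩ := tshift_H h
    rw [spq_H hm]
    right
    simp [ρv, voff]

lemma two_not_wedge_free {s : ℕ} {f f' : CQ (SpRel s) (SpK s)} (hf : f ∈ SpiderQs s)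
    (hf' : f' ∈ SpiderQs s) : 2 ∉ (wedgeQ s f f').free := by
  obtain ⟨I, J, -, rfl⟩ := hf
  obtain ⟨I', J', -, rfl⟩ := hf'
  rintro ((h | ⟨n, hn, he⟩) | h)
  · exact absurd (spq_free_ge h) (by omega)
  · have := spq_free_ge hn
    simp only [ρw] at he
    split at he <;> [omega; (simp [voff] at he; omega)]
  · rcases h with h | h <;> simp [voff] at h; omega

lemma one_not_vee_free {s : ℕ} {f f' : CQ (SpRel s) (SpK s)} (hf : f ∈ SpiderQs s)
    (hf' : f' ∈ SpiderQs s) : 1 ∉ (veeQ s f f').free := by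
  obtain ⟨I, J, -, rfl⟩ := hf
  obtain ⟨I', J', -, rfl⟩ := hf'
  rintro ((h | ⟨n, hn, he⟩) | h)
  · exact absurd (spq_free_ge h) (by omega)
  · have := spq_free_ge hn
    simp only [ρv] at he
    split at he <;> [omega; (simp [voff] at he; omega)]
  · rcases h with h | h <;> simp [voff] at h; omega

lemma smap_paint_H {s : ℕ} {σ : SpTerm s → SpTerm s} {B : Conj (SpRel s) (SpK s)}
    {cc c : Bool} {l : List (SpTerm s)}
    (h : ((SpRel.H, c), l) ∈ smap σ (paint cc B)) :
    c = cc ∧ ∃ l0, (SpRel.H, l0) ∈ B ∧ l = l0.map σ := by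
  rcases h with ⟨a, ⟨b, hb, rfl⟩, he⟩
  simp only [Prod.mk.injEq] at he
  obtain ⟨⟨hr, hc⟩, hl⟩ := he
  exact ⟨hc.symm, b.2, by rw [← hr]; exact hb, hl.symm⟩

end Spider
namespace Spider
open CQD

lemma ideal_H {s : ℕ} {c : Bool} {l : List (SpTerm s)}
    (h : ((SpRel.H, c), l) ∈ idealSp s true none none) :
    c = true ∧ l = [Sum.inl 0, Sum.inl 1, Sum.inl 2] := by
  rcases h with h | h
  · simp only [Set.mem_singleton_iff, Prod.mk.injEq] at h
    exact ⟨h.1.2, by simpa [vz, vtail, vant] using h.2⟩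
  · simp only [Set.mem_iUnion, Set.mem_insert_iff, Set.mem_singleton_iff,
      Prod.mk.injEq] at h
    rcases h with ⟨i, ⟨⟨h, -⟩, -⟩ | ⟨⟨h, -⟩, -⟩ | ⟨⟨h, -⟩, -⟩ | ⟨⟨h, -⟩, -⟩⟩ <;>
      exact absurd h (by simp)

lemma step_H {s : ℕ} {𝒬 : Set (CQ (SpRel s) (SpK s))} (h𝒬 : 𝒬 ⊆ BinQs s)
    {P S' : Struc (CRel (SpRel s)) (SpTerm s)} {T : TGD (CRel (SpRel s)) (SpK s)}
    (hT : T ∈ TQ 𝒬) {b : ℕ → SpTerm s} (hstep : IsStep T P (spι s) b S') :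
    ∃ (cc : Bool) (u v : SpTerm s),
      ∀ c a x₁ x₂, ((SpRel.H, c), [a, x₁, x₂]) ∈ S' →
        ((SpRel.H, c), [a, x₁, x₂]) ∈ P ∨
        (c = cc ∧ (a = u ∨ a = v) ∧ (x₁ ∉ adom P ∨ x₂ ∉ adom P)) := by
  obtain ⟨Q, hQ𝒬, c0, rfl⟩ := hT
  obtain ⟨g, hfr, hfresh, -, rfl⟩ := hstep
  obtain ⟨f, hf, f', hf', hQ⟩ := h𝒬 hQ𝒬
  refine ⟨!c0, g 0, g (voff s), ?_⟩
  rintro c a x₁ x₂ (h | h)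
  · exact Or.inl h
  · right
    obtain ⟨hc, l0, hm, hl⟩ := smap_paint_H h
    rcases hQ with rfl | rfl
    · rcases wedge_H hf hf' hm with rfl | rfl <;>
        simp only [List.map_cons, List.map_nil, List.cons.injEq, and_true] at hl <;>
        obtain ⟨rfl, rfl, rfl⟩ := hl
      · exact ⟨hc, Or.inl rfl, Or.inr (hfresh 2 (two_not_wedge_free hf hf')).1⟩
      · exact ⟨hc, Or.inr rfl, Or.inr (hfresh 2 (two_not_wedge_free hf hf')).1⟩
    · rcases vee_H hf hf' hm with rfl | rfl <;>
        simp only [List.map_cons, List.map_nil, List.cons.injEq, and_true] at hl <;>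
        obtain ⟨rfl, rfl, rfl⟩ := hl
      · exact ⟨hc, Or.inl rfl, Or.inl (hfresh 1 (one_not_vee_free hf hf')).1⟩
      · exact ⟨hc, Or.inr rfl, Or.inl (hfresh 1 (one_not_vee_free hf hf')).1⟩

end Spider
open CQD Spider in
theorem at_most_two_heads (s : ℕ) (𝒬 : Set (CQD.CQ (SpRel s) (SpK s)))
    (h𝒬 : 𝒬 ⊆ BinQs s) (S : Struc (CRel (SpRel s)) (SpTerm s))
    (hS : SpChase s 𝒬 S) (a₁ a₂ : SpTerm s) :
    ({a : SpTerm s | ∃ c : Bool, ((SpRel.H, c), [a, a₁, a₂]) ∈ S}.encard ≤ 2) ∧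
    (∀ (a a' : SpTerm s) (c c' : Bool),
      ((SpRel.H, c), [a, a₁, a₂]) ∈ S → ((SpRel.H, c'), [a', a₁, a₂]) ∈ S →
      c = c') := by
  classical
  obtain ⟨C, rfl⟩ := hS
  -- every atom of the result has a minimal stage
  have hmin : ∀ {c : Bool} {a : SpTerm s}, ((SpRel.H, c), [a, a₁, a₂]) ∈ C.result →
      ∃ i, i < C.len ∧ ((SpRel.H, c), [a, a₁, a₂]) ∈ C.seq i ∧
        ((SpRel.H, c), [a, a₁, a₂]) ∉ partUnion C.seq i := by
    intro c a h
    obtain ⟨i, hi, hmem⟩ := mem_partUnion.mp h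
    obtain ⟨m, ⟨hm1, hm2⟩, hm3⟩ := Ordinal.lt_wf.has_min
      {j | j < C.len ∧ ((SpRel.H, c), [a, a₁, a₂]) ∈ C.seq j} ⟨i, hi, hmem⟩
    refine ⟨m, hm1, hm2, fun hP => ?_⟩
    obtain ⟨j, hj, hjm⟩ := mem_partUnion.mp hP
    exact hm3 j ⟨hj.trans hm1, hjm⟩ hj
  have hadom : ∀ {c : Bool} {a : SpTerm s} {i : Ordinal.{0}},
      ((SpRel.H, c), [a, a₁, a₂]) ∈ partUnion C.seq i →
      a₁ ∈ adom (partUnion C.seq i) ∧ a₂ ∈ adom (partUnion C.seq i) := by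
    intro c a i h
    exact ⟨⟨_, h, by simp⟩, ⟨_, h, by simp⟩⟩
  have hsub : ∀ {j i : Ordinal.{0}}, j < i → C.seq j ⊆ partUnion C.seq i :=
    fun hj _ hx => mem_partUnion.mpr ⟨_, hj, hx⟩
  by_cases hne : ∃ (c : Bool) (a : SpTerm s), ((SpRel.H, c), [a, a₁, a₂]) ∈ C.result
  swap
  · push_neg at hne
    constructor
    · have : {a : SpTerm s | ∃ c : Bool, ((SpRel.H, c), [a, a₁, a₂]) ∈ C.result} = ∅ := by
        ext a; simpa using fun c => hne c a
      rw [this, Set.encard_empty]; exact (by norm_num : (0:ℕ∞) ≤ 2)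
    · intro a a' c c' hm _
      exact absurd hm (hne c a)
  obtain ⟨c₀, a₀, h₀⟩ := hne
  obtain ⟨i₀, hi₀len, hi₀mem, hi₀new⟩ := hmin h₀
  have main : ∃ (cc : Bool) (u v : SpTerm s), ∀ (c : Bool) (a : SpTerm s),
      ((SpRel.H, c), [a, a₁, a₂]) ∈ C.result → c = cc ∧ (a = u ∨ a = v) := by
    rcases eq_or_ne i₀ 0 with rfl | hne0
    · -- the distinguished atom is in the initial structure
      rw [C.init] at hi₀mem
      refine ⟨true, Sum.inl 0, Sum.inl 0, ?_⟩
      intro c a h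
      obtain ⟨i, hilen, himem, hinew⟩ := hmin h
      rcases eq_or_ne i 0 with rfl | hne
      · rw [C.init] at himem
        obtain ⟨hc, hl⟩ := ideal_H himem
        simp only [List.cons.injEq] at hl
        exact ⟨hc, Or.inl hl.1⟩
      · exfalso
        have hpos : 0 < i := pos_iff_ne_zero.mpr hne
        obtain ⟨p, hpToDo, hstep⟩ := C.step i hpos hilen
        obtain ⟨cc, u, v, hprop⟩ := step_H h𝒬 hpToDo.1 hstep
        rcases hprop c a a₁ a₂ himem with hP | ⟨-, -, hfr⟩
        · exact hinew hP
        · have h0P : ((SpRel.H, c₀), [a₀, a₁, a₂]) ∈ partUnion C.seq i :=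
            hsub hpos (by rw [C.init]; exact hi₀mem)
          rcases hfr with hfr | hfr
          · exact hfr (hadom h0P).1
          · exact hfr (hadom h0P).2
    · have hpos₀ : 0 < i₀ := pos_iff_ne_zero.mpr hne0
      obtain ⟨p, hpToDo, hstep⟩ := C.step i₀ hpos₀ hi₀len
      obtain ⟨cc, u, v, hprop⟩ := step_H h𝒬 hpToDo.1 hstep
      have hfr₀ : a₁ ∉ adom (partUnion C.seq i₀) ∨ a₂ ∉ adom (partUnion C.seq i₀) := by
        rcases hprop c₀ a₀ a₁ a₂ hi₀mem with hP | ⟨-, -, hfr⟩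
        · exact absurd hP hi₀new
        · exact hfr
      refine ⟨cc, u, v, ?_⟩
      intro c a h
      obtain ⟨i, hilen, himem, hinew⟩ := hmin h
      rcases lt_trichotomy i i₀ with hlt | rfl | hgt
      · exfalso
        have hP : ((SpRel.H, c), [a, a₁, a₂]) ∈ partUnion C.seq i₀ := hsub hlt himem
        rcases hfr₀ with hfr | hfr
        · exact hfr (hadom hP).1
        · exact hfr (hadom hP).2
      · rcases hprop c a a₁ a₂ himem with hP | ⟨hc, ha, -⟩
        · exact absurd hP hinew
        · exact ⟨hc, ha⟩
      · exfalso
        have hpos : 0 < i := hpos₀.trans hgt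
        obtain ⟨p', hpToDo', hstep'⟩ := C.step i hpos hilen
        obtain ⟨cc', u', v', hprop'⟩ := step_H h𝒬 hpToDo'.1 hstep'
        rcases hprop' c a a₁ a₂ himem with hP | ⟨-, -, hfr⟩
        · exact hinew hP
        · have h0P : ((SpRel.H, c₀), [a₀, a₁, a₂]) ∈ partUnion C.seq i :=
            hsub hgt hi₀mem
          rcases hfr with hfr | hfr
          · exact hfr (hadom h0P).1
          · exact hfr (hadom h0P).2
  obtain ⟨cc, u, v, hmain⟩ := main
  constructor
  · have hsub2 : {a : SpTerm s | ∃ c : Bool, ((SpRel.H, c), [a, a₁, a₂]) ∈ C.result}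
        ⊆ {u, v} := by
      rintro a ⟨c, h⟩
      exact (hmain c a h).2
    calc ({a : SpTerm s | ∃ c : Bool, ((SpRel.H, c), [a, a₁, a₂]) ∈ C.result}).encard
        ≤ ({u, v} : Set (SpTerm s)).encard := Set.encard_le_encard hsub2
      _ ≤ ({v} : Set (SpTerm s)).encard + 1 := Set.encard_insert_le {v} u
      _ ≤ 2 := by simp [Set.encard_singleton]; norm_num
  · intro a a' c c' hm hm'
    exact (hmain c a hm).1.trans (hmain c' a' hm').1.symm
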